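/- For 0 < ε < 1/2, the function p ↦ log( ε²/(p + ε − 2εp) + (1−ε)²/(1 − ε − p + 2εp) ) / log(1/(1−p)) is monotonically increasing on (0, 1/2]; consequently its supremum over p ∈ (0, 1/2] is attained at p = 1/2 and equals log₂( 2(1 − 2ε(1−ε)) ). -/

import Mathlib

open Real Set


private lemma slope_log (u p : ℝ) (hu0 : 0 ≤ u) (hup : u ≤ p) (hp0 : 0 < p) (hp1 : p < 1) :
    u * Real.log (1 - p) ≤ p * Real.log (1 - u) := by
  have hcc := strictConcaveOn_log_Ioi.concaveOn
  have h1 : (1:ℝ) ∈ Set.Ioi (0:ℝ) := by norm_num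
  have h2 : (1 - p) ∈ Set.Ioi (0:ℝ) := by simp only [Set.mem_Ioi]; linarith
  have ha : 0 ≤ 1 - u / p := by
    have : u / p ≤ 1 := by rw [div_le_one hp0]; exact hup
    linarith
  have hb : 0 ≤ u / p := div_nonneg hu0 hp0.le
  have hab : (1 - u/p) + u/p = 1 := by ring
  have key := hcc.2 h1 h2 ha hb hab
  simp only [smul_eq_mul, mul_one, Real.log_one, mul_zero, zero_add] at key
  have harg : (1 - u/p) + (u/p) * (1 - p) = 1 - u := by field_simp; ring
  rw [harg] at key
  have := mul_le_mul_of_nonneg_left key hp0.le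
  calc u * Real.log (1-p) = p * (u/p * Real.log (1-p)) := by field_simp
  _ ≤ p * Real.log (1-u) := this

set_option maxHeartbeats 1000000 in
private lemma deriv_nonneg (ε : ℝ) (hε0 : 0 < ε) (hε : ε < 1/2) {p : ℝ} (hp0 : 0 < p)
    (hp : p < 1/2) :
    0 ≤ ((-(ε^2*(1-2*ε))/(p + ε - 2*ε*p)^2 + ((1-ε)^2*(1-2*ε))/(1 - ε - p + 2*ε*p)^2)
          / (ε ^ 2 / (p + ε - 2 * ε * p) + (1 - ε) ^ 2 / (1 - ε - p + 2 * ε * p))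
          * Real.log (1 / (1 - p))
        - Real.log (ε ^ 2 / (p + ε - 2 * ε * p) + (1 - ε) ^ 2 / (1 - ε - p + 2 * ε * p))
          * (1 / (1 - p)))
        / (Real.log (1 / (1 - p)))^2 := by
  have hp1 : p < 1 := by linarith
  have h1p : (0:ℝ) < 1 - p := by linarith
  have hd1pos : 0 < p + ε - 2 * ε * p := by nlinarith
  have hd2pos : 0 < 1 - ε - p + 2 * ε * p := by nlinarith
  have hApos : 0 < ε ^ 2 / (p + ε - 2 * ε * p) + (1 - ε) ^ 2 / (1 - ε - p + 2 * ε * p) :=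
    add_pos (div_pos (pow_pos hε0 2) hd1pos) (div_pos (pow_pos (by linarith) 2) hd2pos)
  have hhpos : 0 < Real.log (1 / (1 - p)) := by
    apply Real.log_pos
    rw [lt_div_iff₀ h1p]; linarith
  have hnpos : 0 < ε*(1-ε) + p*(1-2*ε)^2 := by nlinarith
  have hspos : 0 < 1 - 2*ε := by linarith
  -- u := p^2*(1-2*ε)^2 / (ε*(1-ε) + p*(1-2*ε)^2)
  have hu0 : 0 ≤ p^2*(1-2*ε)^2 / (ε*(1-ε) + p*(1-2*ε)^2) := by positivity
  have hup : p^2*(1-2*ε)^2 / (ε*(1-ε) + p*(1-2*ε)^2) ≤ p := by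
    rw [div_le_iff₀ hnpos]
    nlinarith [mul_pos hp0 (mul_pos hε0 (show (0:ℝ) < 1-ε by linarith))]
  -- A = n / (d1*d2)
  have hA_eq : ε ^ 2 / (p + ε - 2 * ε * p) + (1 - ε) ^ 2 / (1 - ε - p + 2 * ε * p)
      = (ε*(1-ε) + p*(1-2*ε)^2) / ((p + ε - 2*ε*p) * (1 - ε - p + 2*ε*p)) := by
    rw [div_add_div _ _ hd1pos.ne' hd2pos.ne']
    congr 1
    ring
  have h1u : 1 - p^2*(1-2*ε)^2 / (ε*(1-ε) + p*(1-2*ε)^2)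
      = ((p + ε - 2*ε*p) * (1 - ε - p + 2*ε*p)) / (ε*(1-ε) + p*(1-2*ε)^2) := by
    field_simp
    ring
  have hlogA_eq : Real.log (ε ^ 2 / (p + ε - 2 * ε * p) + (1 - ε) ^ 2 / (1 - ε - p + 2 * ε * p))
      = - Real.log (1 - p^2*(1-2*ε)^2 / (ε*(1-ε) + p*(1-2*ε)^2)) := by
    rw [hA_eq, h1u, Real.log_div hnpos.ne' (mul_pos hd1pos hd2pos).ne',
      Real.log_div (mul_pos hd1pos hd2pos).ne' hnpos.ne']
    ring
  have hh_eq : Real.log (1 / (1 - p)) = - Real.log (1 - p) := by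
    rw [one_div, Real.log_inv]
  -- key1 : p * log A ≤ u * h
  have key1 : p * Real.log (ε ^ 2 / (p + ε - 2 * ε * p) + (1 - ε) ^ 2 / (1 - ε - p + 2 * ε * p))
      ≤ (p^2*(1-2*ε)^2 / (ε*(1-ε) + p*(1-2*ε)^2)) * Real.log (1 / (1 - p)) := by
    have := slope_log (p^2*(1-2*ε)^2 / (ε*(1-ε) + p*(1-2*ε)^2)) p hu0 hup hp0 hp1
    rw [hlogA_eq, hh_eq]
    linarith [this]
  -- key2 : u / (p*(1-p)) ≤ A'/A
  have key2 : (p^2*(1-2*ε)^2 / (ε*(1-ε) + p*(1-2*ε)^2)) / (p*(1-p))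
      ≤ (-(ε^2*(1-2*ε))/(p + ε - 2*ε*p)^2 + ((1-ε)^2*(1-2*ε))/(1 - ε - p + 2*ε*p)^2)
        / (ε ^ 2 / (p + ε - 2 * ε * p) + (1 - ε) ^ 2 / (1 - ε - p + 2 * ε * p)) := by
    rw [div_le_div_iff₀ (by positivity) hApos]
    have e1 : (p^2*(1-2*ε)^2 / (ε*(1-ε) + p*(1-2*ε)^2))
        * (ε ^ 2 / (p + ε - 2 * ε * p) + (1 - ε) ^ 2 / (1 - ε - p + 2 * ε * p))
        = p^2*(1-2*ε)^2 / ((p + ε - 2*ε*p) * (1 - ε - p + 2*ε*p)) := by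
      rw [hA_eq]
      field_simp
    have e2 : (-(ε^2*(1-2*ε))/(p + ε - 2*ε*p)^2 + ((1-ε)^2*(1-2*ε))/(1 - ε - p + 2*ε*p)^2)
        * (p*(1-p))
        = (p^2*(1-2*ε)^2*((1-p)*(2*ε*(1-ε)+p*(1-2*ε)^2)))
          / ((p + ε - 2*ε*p) * (1 - ε - p + 2*ε*p))^2 := by
      rw [div_add_div _ _ (pow_ne_zero 2 hd1pos.ne') (pow_ne_zero 2 hd2pos.ne'),
        div_mul_eq_mul_div, div_eq_div_iff (mul_pos (pow_pos hd1pos 2) (pow_pos hd2pos 2)).ne'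
          (pow_pos (mul_pos hd1pos hd2pos) 2).ne']
      ring
    rw [e1, e2, div_le_div_iff₀ (by positivity) (by positivity)]
    have hfact : (p + ε - 2*ε*p) * (1 - ε - p + 2*ε*p) ≤ (1-p)*(2*ε*(1-ε)+p*(1-2*ε)^2) := by
      nlinarith [mul_nonneg (mul_nonneg hε0.le (by linarith : (0:ℝ) ≤ 1-ε))
        (by linarith : (0:ℝ) ≤ 1-2*p)]
    calc p^2*(1-2*ε)^2 * ((p + ε - 2*ε*p) * (1 - ε - p + 2*ε*p))^2
        = p^2*(1-2*ε)^2*((p + ε - 2*ε*p) * (1 - ε - p + 2*ε*p))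
          * ((p + ε - 2*ε*p) * (1 - ε - p + 2*ε*p)) := by ring
      _ ≤ p^2*(1-2*ε)^2*((p + ε - 2*ε*p) * (1 - ε - p + 2*ε*p))
          * ((1-p)*(2*ε*(1-ε)+p*(1-2*ε)^2)) := by
            exact mul_le_mul_of_nonneg_left hfact (by positivity)
      _ = p^2*(1-2*ε)^2*((1-p)*(2*ε*(1-ε)+p*(1-2*ε)^2))
          * ((p + ε - 2*ε*p) * (1 - ε - p + 2*ε*p)) := by ring
  -- combine
  apply div_nonneg _ (sq_nonneg _)
  have hLA : Real.log (ε ^ 2 / (p + ε - 2 * ε * p) + (1 - ε) ^ 2 / (1 - ε - p + 2 * ε * p))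
      ≤ (p^2*(1-2*ε)^2 / (ε*(1-ε) + p*(1-2*ε)^2)) * Real.log (1 / (1 - p)) / p := by
    rw [le_div_iff₀ hp0]
    linarith [key1]
  have b1 : Real.log (ε ^ 2 / (p + ε - 2 * ε * p) + (1 - ε) ^ 2 / (1 - ε - p + 2 * ε * p))
      * (1/(1-p))
      ≤ (p^2*(1-2*ε)^2 / (ε*(1-ε) + p*(1-2*ε)^2)) / (p*(1-p)) * Real.log (1 / (1 - p)) := by
    have h2 := mul_le_mul_of_nonneg_right hLA (by positivity : (0:ℝ) ≤ 1/(1-p))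
    calc Real.log (ε ^ 2 / (p + ε - 2 * ε * p) + (1 - ε) ^ 2 / (1 - ε - p + 2 * ε * p))
        * (1/(1-p))
        ≤ (p^2*(1-2*ε)^2 / (ε*(1-ε) + p*(1-2*ε)^2)) * Real.log (1 / (1 - p)) / p * (1/(1-p)) := h2
      _ = (p^2*(1-2*ε)^2 / (ε*(1-ε) + p*(1-2*ε)^2)) / (p*(1-p)) * Real.log (1 / (1 - p)) := by
          field_simp
  have b2 := mul_le_mul_of_nonneg_right key2 hhpos.le
  linarith [b1, b2]


private lemma hasDeriv (ε : ℝ) (hε0 : 0 < ε) (hε : ε < 1/2) {p : ℝ} (hp0 : 0 < p) (hp1 : p < 1) :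
    HasDerivAt (fun p : ℝ =>
        Real.log (ε ^ 2 / (p + ε - 2 * ε * p) + (1 - ε) ^ 2 / (1 - ε - p + 2 * ε * p))
          / Real.log (1 / (1 - p)))
      (((-(ε^2*(1-2*ε))/(p + ε - 2*ε*p)^2 + ((1-ε)^2*(1-2*ε))/(1 - ε - p + 2*ε*p)^2)
          / (ε ^ 2 / (p + ε - 2 * ε * p) + (1 - ε) ^ 2 / (1 - ε - p + 2 * ε * p))
          * Real.log (1 / (1 - p))
        - Real.log (ε ^ 2 / (p + ε - 2 * ε * p) + (1 - ε) ^ 2 / (1 - ε - p + 2 * ε * p))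
          * (1 / (1 - p)))
        / (Real.log (1 / (1 - p)))^2) p := by
  have hd1pos : 0 < p + ε - 2 * ε * p := by nlinarith
  have hd2pos : 0 < 1 - ε - p + 2 * ε * p := by nlinarith
  have hApos : 0 < ε ^ 2 / (p + ε - 2 * ε * p) + (1 - ε) ^ 2 / (1 - ε - p + 2 * ε * p) :=
    add_pos (div_pos (pow_pos hε0 2) hd1pos) (div_pos (pow_pos (by linarith) 2) hd2pos)
  have h1p : (0:ℝ) < 1 - p := by linarith
  have hhpos : 0 < Real.log (1 / (1 - p)) := by
    apply Real.log_pos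
    rw [lt_div_iff₀ h1p]; linarith
  have hd1 : HasDerivAt (fun q : ℝ => q + ε - 2 * ε * q) (1 - 2*ε) p := by
    have := ((hasDerivAt_id p).add_const ε).sub ((hasDerivAt_id p).const_mul (2*ε))
    exact this.congr_deriv (by ring)
  have hd2 : HasDerivAt (fun q : ℝ => 1 - ε - q + 2 * ε * q) (-(1 - 2*ε)) p := by
    have := ((hasDerivAt_const p (1 - ε)).sub (hasDerivAt_id p)).add
        ((hasDerivAt_id p).const_mul (2*ε))
    exact this.congr_deriv (by ring)
  have hq1 : HasDerivAt (fun q : ℝ => ε ^ 2 / (q + ε - 2 * ε * q))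
      (-(ε^2*(1-2*ε))/(p + ε - 2*ε*p)^2) p := by
    have := (hasDerivAt_const p (ε^2)).div hd1 hd1pos.ne'
    exact this.congr_deriv (by ring)
  have hq2 : HasDerivAt (fun q : ℝ => (1 - ε) ^ 2 / (1 - ε - q + 2 * ε * q))
      (((1-ε)^2*(1-2*ε))/(1 - ε - p + 2*ε*p)^2) p := by
    have := (hasDerivAt_const p ((1-ε)^2)).div hd2 hd2pos.ne'
    exact this.congr_deriv (by ring)
  have hA : HasDerivAt (fun q : ℝ => ε ^ 2 / (q + ε - 2 * ε * q) + (1 - ε) ^ 2 / (1 - ε - q + 2 * ε * q))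
      (-(ε^2*(1-2*ε))/(p + ε - 2*ε*p)^2 + ((1-ε)^2*(1-2*ε))/(1 - ε - p + 2*ε*p)^2) p :=
    hq1.add hq2
  have hg : HasDerivAt (fun q : ℝ =>
      Real.log (ε ^ 2 / (q + ε - 2 * ε * q) + (1 - ε) ^ 2 / (1 - ε - q + 2 * ε * q)))
      ((-(ε^2*(1-2*ε))/(p + ε - 2*ε*p)^2 + ((1-ε)^2*(1-2*ε))/(1 - ε - p + 2*ε*p)^2)
        / (ε ^ 2 / (p + ε - 2 * ε * p) + (1 - ε) ^ 2 / (1 - ε - p + 2 * ε * p))) p :=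
    hA.log hApos.ne'
  have hinv : HasDerivAt (fun q : ℝ => 1 / (1 - q)) (1/(1-p)^2) p := by
    have hs : HasDerivAt (fun q : ℝ => 1 - q) (-1) p := by
      exact ((hasDerivAt_const p (1:ℝ)).sub (hasDerivAt_id p)).congr_deriv (by ring)
    have := (hasDerivAt_const p (1:ℝ)).div hs h1p.ne'
    exact this.congr_deriv (by ring)
  have hinvpos : 0 < 1 / (1 - p) := by positivity
  have hh : HasDerivAt (fun q : ℝ => Real.log (1 / (1 - q))) (1/(1-p)) p := by
    have := hinv.log hinvpos.ne'
    convert this using 1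
    field_simp
  exact hg.div hh hhpos.ne'

/-- For `0 < ε < 1/2`, the map
`p ↦ log(ε²/(p + ε - 2εp) + (1-ε)²/(1 - ε - p + 2εp)) / log(1/(1-p))`
is monotonically increasing on `(0, 1/2]`, and its supremum over `(0, 1/2]` is
attained at `p = 1/2` and equals `log₂(2(1 - 2ε(1-ε)))`. -/
theorem eta2_bsc_monotone_in_p
    (ε : ℝ) (hε0 : 0 < ε) (hε : ε < 1 / 2) :
    MonotoneOn
        (fun p : ℝ =>
          Real.log (ε ^ 2 / (p + ε - 2 * ε * p)
              + (1 - ε) ^ 2 / (1 - ε - p + 2 * ε * p)) / Real.log (1 / (1 - p)))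
        (Set.Ioc 0 (1 / 2))
      ∧ sSup ((fun p : ℝ =>
          Real.log (ε ^ 2 / (p + ε - 2 * ε * p)
              + (1 - ε) ^ 2 / (1 - ε - p + 2 * ε * p)) / Real.log (1 / (1 - p)))
            '' Set.Ioc 0 (1 / 2))
        = Real.logb 2 (2 * (1 - 2 * ε * (1 - ε))) := by
  have hε' : ε < 1/2 := hε
  have mono : MonotoneOn
      (fun p : ℝ =>
        Real.log (ε ^ 2 / (p + ε - 2 * ε * p)
            + (1 - ε) ^ 2 / (1 - ε - p + 2 * ε * p)) / Real.log (1 / (1 - p)))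
      (Set.Ioc 0 (1 / 2)) := by
    apply monotoneOn_of_deriv_nonneg (convex_Ioc 0 (1/2))
    · intro x hx
      exact (hasDeriv ε hε0 hε' hx.1
        (lt_of_le_of_lt hx.2 (by norm_num))).continuousAt.continuousWithinAt
    · rw [interior_Ioc]
      intro x hx
      exact (hasDeriv ε hε0 hε' hx.1
        (by linarith [hx.2] : x < 1)).differentiableAt.differentiableWithinAt
    · rw [interior_Ioc]
      intro x hx
      rw [(hasDeriv ε hε0 hε' hx.1 (by linarith [hx.2] : x < 1)).deriv]
      exact deriv_nonneg ε hε0 hε' hx.1 hx.2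
  refine ⟨mono, ?_⟩
  have hmem : (1/2:ℝ) ∈ Set.Ioc (0:ℝ) (1/2) := by constructor <;> norm_num
  have hgr : IsGreatest
      ((fun p : ℝ =>
        Real.log (ε ^ 2 / (p + ε - 2 * ε * p)
            + (1 - ε) ^ 2 / (1 - ε - p + 2 * ε * p)) / Real.log (1 / (1 - p)))
          '' Set.Ioc 0 (1 / 2))
      ((fun p : ℝ =>
        Real.log (ε ^ 2 / (p + ε - 2 * ε * p)
            + (1 - ε) ^ 2 / (1 - ε - p + 2 * ε * p)) / Real.log (1 / (1 - p))) (1/2)) := by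
    constructor
    · exact Set.mem_image_of_mem _ hmem
    · rintro y ⟨x, hx, rfl⟩
      exact mono hx hmem hx.2
  rw [hgr.csSup_eq]
  show Real.log (ε ^ 2 / (1/2 + ε - 2 * ε * (1/2))
      + (1 - ε) ^ 2 / (1 - ε - 1/2 + 2 * ε * (1/2))) / Real.log (1 / (1 - 1/2))
    = Real.logb 2 (2 * (1 - 2 * ε * (1 - ε)))
  have h1 : (1:ℝ)/2 + ε - 2 * ε * (1/2) = 1/2 := by ring
  have h2 : 1 - ε - 1/2 + 2 * ε * (1/2) = 1/2 := by ring
  have h3 : ε ^ 2 / ((1:ℝ)/2) + (1 - ε) ^ 2 / ((1:ℝ)/2) = 2 * (1 - 2 * ε * (1 - ε)) := by ring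
  rw [h1, h2, h3, Real.logb]
  norm_num
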